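/- arXiv:2405.05881 — 2 statements merged into one kernel-verified Lean document; each statement's English description precedes it below -/
import Mathlib

section
/- Let P be a poset, P' its poset of finite nonempty chains ordered by inclusion, and let c < c' be chains in P' with c' having k+1 elements and c having l+1 elements. Then the open interval (c, c') in P' is order-isomorphic to the poset of proper nonempty subsets of a set of size k − l (namely the elements of c' not in c), ordered by inclusion. -/
/-- Let `P` be a poset, `P'` its poset of finite nonempty chains ordered by
inclusion, and let `c < c'` be chains in `P'` where `c'` has `k + 1` elements and `c` has
`l + 1` elements.  Then the set `c' \ c` of elements of `c'` not in `c` has size `k - l`,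
and the open interval `(c, c')` in `P'` is order-isomorphic to the poset of proper nonempty
subsets of `c' \ c`, ordered by inclusion. -/
theorem stmt3 {P : Type*} [PartialOrder P] [DecidableEq P] (k l : ℕ)
    (c c' : {d : Finset P // d.Nonempty ∧ IsChain (· ≤ ·) (d : Set P)})
    (hlt : c < c') (hk : c'.1.card = k + 1) (hl : c.1.card = l + 1) :
    (c'.1 \ c.1).card = k - l ∧
    Nonempty ((Set.Ioo c c') ≃o {T : Finset P // T.Nonempty ∧ T ⊂ c'.1 \ c.1}) := by
  have hsub : c.1 ⊂ c'.1 := hlt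
  constructor
  · rw [Finset.card_sdiff_of_subset hsub.subset, hk, hl, Nat.succ_sub_succ]
  refine ⟨{ toFun := fun d => ⟨d.1.1 \ c.1, ?_, ?_⟩,
            invFun := fun T => ⟨⟨c.1 ∪ T.1, ?_, ?_⟩, ?_, ?_⟩,
            left_inv := ?_, right_inv := ?_, map_rel_iff' := ?_ }⟩
  · -- nonempty
    rw [Finset.sdiff_nonempty]
    exact (Subtype.coe_lt_coe.mpr d.2.1).not_subset
  · -- proper subset of c' \ c
    have hdc : c.1 ⊂ d.1.1 := d.2.1
    have hdc' : d.1.1 ⊂ c'.1 := d.2.2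
    refine ⟨Finset.sdiff_subset_sdiff hdc'.subset le_rfl, ?_⟩
    intro hcon
    obtain ⟨x, hx, hxd⟩ := Finset.exists_of_ssubset hdc'
    have hxc : x ∉ c.1 := fun h => hxd (hdc.subset h)
    have : x ∈ d.1.1 \ c.1 := hcon (Finset.mem_sdiff.mpr ⟨hx, hxc⟩)
    exact hxd (Finset.mem_sdiff.mp this).1
  · -- nonempty of union
    exact c.2.1.mono Finset.subset_union_left
  · -- chain
    refine c'.2.2.mono ?_
    intro x hx
    simp only [Finset.coe_union, Set.mem_union, Finset.mem_coe] at hx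
    rcases hx with h | h
    · exact hsub.subset h
    · exact (Finset.mem_sdiff.mp (T.2.2.subset h)).1
  · -- c < c ∪ T
    rw [Subtype.mk_lt_mk]
    refine Finset.ssubset_iff_of_subset Finset.subset_union_left |>.mpr ?_
    obtain ⟨x, hx⟩ := T.2.1
    exact ⟨x, Finset.mem_union_right _ hx, (Finset.mem_sdiff.mp (T.2.2.subset hx)).2⟩
  · -- c ∪ T < c'
    rw [Subtype.mk_lt_mk]
    obtain ⟨x, hx, hxT⟩ := Finset.exists_of_ssubset T.2.2
    obtain ⟨hxc', hxc⟩ := Finset.mem_sdiff.mp hx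
    refine Finset.ssubset_iff_of_subset
      (Finset.union_subset hsub.subset (fun y hy => (Finset.mem_sdiff.mp (T.2.2.subset hy)).1))
      |>.mpr ⟨x, hxc', ?_⟩
    simp only [Finset.mem_union, not_or]
    exact ⟨hxc, hxT⟩
  · -- left_inv
    intro d
    ext y
    simp only [Finset.mem_union, Finset.mem_sdiff]
    constructor
    · rintro (h | ⟨h, _⟩)
      · exact d.2.1.le h
      · exact h
    · intro h
      by_cases hyc : y ∈ c.1
      · exact Or.inl hyc
      · exact Or.inr ⟨h, hyc⟩
  · -- right_inv
    intro T
    have hdisj : Disjoint c.1 T.1 :=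
      Finset.disjoint_left.mpr fun a ha haT => (Finset.mem_sdiff.mp (T.2.2.subset haT)).2 ha
    ext y
    simp only [Finset.mem_sdiff, Finset.mem_union]
    constructor
    · rintro ⟨h | h, hyc⟩
      · exact absurd h hyc
      · exact h
    · intro h
      exact ⟨Or.inr h, fun hc => Finset.disjoint_left.mp hdisj hc h⟩
  · -- map_rel_iff
    intro d e
    show d.1.1 \ c.1 ⊆ e.1.1 \ c.1 ↔ d ≤ e
    constructor
    · intro h
      show d.1.1 ⊆ e.1.1
      intro y hy
      by_cases hyc : y ∈ c.1
      · exact e.2.1.le hyc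
      · exact (Finset.mem_sdiff.mp (h (Finset.mem_sdiff.mpr ⟨hy, hyc⟩))).1
    · intro h
      exact Finset.sdiff_subset_sdiff h le_rfl
end

section
/- A simplicial 2-complex Y is a local homology CM complex of dimension 2 (i.e., the local homology at every simplex is concentrated in degree 2) if and only if every vertex link of Y is a nonempty connected graph containing at least one edge. -/
/-- An abstract simplicial complex on a vertex set `V`: a collection of nonempty finite
subsets of `V` closed under passing to nonempty subsets. -/
structure ASC (V : Type*) where
  faces : Set (Finset V)
  nonempty_of_mem : ∀ s ∈ faces, s.Nonempty
  down_closed : ∀ s ∈ faces, ∀ t ⊆ s, t.Nonempty → t ∈ faces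

namespace ASC

variable {V : Type*} [LinearOrder V]

/-- The simplicial boundary operator on the free abelian group on all finite subsets of
`V` (oriented via the linear order on `V`).  The boundary of a vertex `{x}` is the empty
set generator, so degree-`0` cycles are augmented (reduced) cycles. -/
noncomputable def bdry : (Finset V →₀ ℤ) →ₗ[ℤ] (Finset V →₀ ℤ) :=
  Finsupp.lift _ ℤ _
    (fun s => ∑ x ∈ s,
      (-1 : ℤ) ^ ((s.sort (· ≤ ·)).idxOf x) • Finsupp.single (s.erase x) (1 : ℤ))

/-- Projection onto the span of the simplices containing `σ`: the chain-level quotient map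
`C_•(X) → C_•(X, X - st̊(σ)) = C_•^σ(X)`. -/
noncomputable def fil (σ : Finset V) : (Finset V →₀ ℤ) →ₗ[ℤ] (Finset V →₀ ℤ) where
  toFun f := f.filter (fun s => σ ⊆ s)
  map_add' f g := by
    classical
    ext s
    by_cases h : σ ⊆ s <;> simp [Finsupp.filter_apply, h]
  map_smul' c f := by
    classical
    ext s
    by_cases h : σ ⊆ s <;> simp [Finsupp.filter_apply, h]

/-- The relative (local) boundary operator of the relative chain complex
`C_•^σ(X) = C_•(X)/C_•(X - st̊(σ))`. -/
noncomputable def localBdry (σ : Finset V) : (Finset V →₀ ℤ) →ₗ[ℤ] (Finset V →₀ ℤ) :=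
  (fil σ).comp bdry

/-- The degree-`k` part of the relative chain complex `C_•^σ(K)`: chains supported on the
`k`-simplices of `K` containing `σ`. -/
noncomputable def relChains (K : ASC V) (σ : Finset V) (k : ℕ) :
    Submodule ℤ (Finset V →₀ ℤ) :=
  Finsupp.supported ℤ ℤ {s | s ∈ K.faces ∧ σ ⊆ s ∧ s.card = k + 1}

/-- The degree-`k` local cycles at `σ`. -/
noncomputable def localCycles (K : ASC V) (σ : Finset V) (k : ℕ) :
    Submodule ℤ (Finset V →₀ ℤ) :=
  relChains K σ k ⊓ LinearMap.ker (localBdry σ)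

/-- The degree-`k` local boundaries at `σ`. -/
noncomputable def localBoundaries (K : ASC V) (σ : Finset V) (k : ℕ) :
    Submodule ℤ (Finset V →₀ ℤ) :=
  Submodule.map (localBdry σ) (relChains K σ (k + 1))

/-- The local homology `h_k(σ) = H_k(C_•(K), C_•(K - st̊(σ)))` of `K` at the simplex `σ`. -/
noncomputable def localHomology (K : ASC V) (σ : Finset V) (k : ℕ) :=
  localCycles K σ k ⧸ (localBoundaries K σ k).comap (localCycles K σ k).subtype

noncomputable instance (K : ASC V) (σ : Finset V) (k : ℕ) :
    AddCommGroup (localHomology K σ k) :=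
  inferInstanceAs (AddCommGroup
    (localCycles K σ k ⧸ (localBoundaries K σ k).comap (localCycles K σ k).subtype))

noncomputable instance (K : ASC V) (σ : Finset V) (k : ℕ) :
    Module ℤ (localHomology K σ k) :=
  inferInstanceAs (Module ℤ
    (localCycles K σ k ⧸ (localBoundaries K σ k).comap (localCycles K σ k).subtype))

/-- `K` is locally finite: each vertex lies in only finitely many faces. -/
def LocallyFinite (K : ASC V) : Prop := ∀ v : V, {s | s ∈ K.faces ∧ v ∈ s}.Finite

end ASC

namespace ASC

variable {V : Type*} [LinearOrder V]

/-- The degree-`k` (reduced/augmented) cycles of `K`. -/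
noncomputable def cycles (K : ASC V) (k : ℕ) : Submodule ℤ (Finset V →₀ ℤ) :=
  Finsupp.supported ℤ ℤ {s | s ∈ K.faces ∧ s.card = k + 1} ⊓ LinearMap.ker bdry

/-- The degree-`k` boundaries of `K`. -/
noncomputable def boundaries (K : ASC V) (k : ℕ) : Submodule ℤ (Finset V →₀ ℤ) :=
  Submodule.map bdry (Finsupp.supported ℤ ℤ {s | s ∈ K.faces ∧ s.card = k + 2})

/-- The degree-`k` reduced simplicial homology `H̃_k(K; ℤ)`. -/
noncomputable def redHomology (K : ASC V) (k : ℕ) :=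
  cycles K k ⧸ (boundaries K k).comap (cycles K k).subtype

noncomputable instance (K : ASC V) (k : ℕ) : AddCommGroup (redHomology K k) :=
  inferInstanceAs (AddCommGroup
    (cycles K k ⧸ (boundaries K k).comap (cycles K k).subtype))

noncomputable instance (K : ASC V) (k : ℕ) : Module ℤ (redHomology K k) :=
  inferInstanceAs (Module ℤ
    (cycles K k ⧸ (boundaries K k).comap (cycles K k).subtype))

/-- The link `lk_K(v)` of a vertex `v` of `K`. -/
def link (K : ASC V) (v : V) : ASC V where
  faces := {s | s.Nonempty ∧ v ∉ s ∧ insert v s ∈ K.faces}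
  nonempty_of_mem s hs := hs.1
  down_closed := by
    rintro s ⟨hne, hv, hins⟩ t hts htne
    exact ⟨htne, fun h => hv (hts h),
      K.down_closed _ hins _ (Finset.insert_subset_insert v hts)
        ⟨v, Finset.mem_insert_self v t⟩⟩

/-- The subcomplex `K - st̊(v)` obtained by deleting the open star of a vertex `v`. -/
def deleteStar (K : ASC V) (v : V) : ASC V where
  faces := {s | s ∈ K.faces ∧ v ∉ s}
  nonempty_of_mem s hs := K.nonempty_of_mem s hs.1
  down_closed := by
    rintro s ⟨hs, hv⟩ t hts htne
    exact ⟨K.down_closed _ hs _ hts htne, fun h => hv (hts h)⟩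

/-- The graph underlying the `1`-skeleton of `K`: vertices are the vertices of `K`, and two
of them are adjacent when they span an edge of `K`. -/
def graphOf (K : ASC V) : SimpleGraph {x : V // ({x} : Finset V) ∈ K.faces} where
  Adj a b := a ≠ b ∧ ({a.1, b.1} : Finset V) ∈ K.faces
  symm := by
    constructor
    rintro a b ⟨h, hf⟩
    exact ⟨h.symm, by rwa [Finset.pair_comm]⟩
  loopless := by constructor; rintro a ⟨h, -⟩; exact h rfl

/-- The link graph of a vertex `v` of a `2`-complex `K`: its vertices are the edges of `K`
containing `v`, two of them being adjacent when their union is a `2`-simplex of `K`. -/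
def vertexLinkGraph (K : ASC V) (v : V) :
    SimpleGraph {e : Finset V // e ∈ K.faces ∧ e.card = 2 ∧ v ∈ e} where
  Adj a b := a ≠ b ∧ (a.1 ∪ b.1) ∈ K.faces
  symm := by
    constructor
    rintro a b ⟨h, hf⟩
    exact ⟨h.symm, by rwa [Finset.union_comm]⟩
  loopless := by constructor; rintro a ⟨h, -⟩; exact h rfl

end ASC

set_option linter.dupNamespace false
set_option linter.unusedSectionVars false
set_option linter.unusedVariables false

namespace ASC
variable {V : Type*} [LinearOrder V]

theorem bdry_single (s : Finset V) (c : ℤ) :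
    bdry (Finsupp.single s c) =
      c • ∑ x ∈ s, (-1 : ℤ) ^ ((s.sort (· ≤ ·)).idxOf x) •
        Finsupp.single (s.erase x) (1 : ℤ) := by
  classical
  rw [bdry, Finsupp.lift_apply, Finsupp.sum_single_index (by simp)]

theorem fil_apply (σ : Finset V) (f : Finset V →₀ ℤ) :
    fil σ f = f.filter (fun s => σ ⊆ s) := rfl

theorem fil_single (σ s : Finset V) (c : ℤ) :
    fil σ (Finsupp.single s c) = if σ ⊆ s then Finsupp.single s c else 0 := by
  classical
  rw [fil_apply]
  split_ifs with h
  · exact Finsupp.filter_single_of_pos _ h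
  · exact Finsupp.filter_single_of_neg _ h

theorem localBdry_single (σ s : Finset V) (c : ℤ) :
    localBdry σ (Finsupp.single s c) =
      c • ∑ x ∈ s, if σ ⊆ s.erase x then
        (-1 : ℤ) ^ ((s.sort (· ≤ ·)).idxOf x) • Finsupp.single (s.erase x) (1 : ℤ)
      else 0 := by
  classical
  rw [localBdry, LinearMap.comp_apply, bdry_single, map_smul, map_sum]
  congr 1
  refine Finset.sum_congr rfl fun x hx => ?_
  rw [map_smul, fil_single]
  split_ifs with h <;> simp

end ASC
namespace ASC
variable {V : Type*} [LinearOrder V]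

/-- Sign of a vertex in a simplex. -/
noncomputable def sgn (v : V) (e : Finset V) : ℤ :=
  (-1) ^ ((e.sort (· ≤ ·)).idxOf v + 1)

theorem sgn_mul_self (v : V) (e : Finset V) : sgn v e * sgn v e = 1 := by
  rw [sgn, ← pow_add]
  exact Even.neg_one_pow ⟨_, rfl⟩

theorem sort_pair {a b : V} (h : a < b) :
    ({a, b} : Finset V).sort (· ≤ ·) = [a, b] := by
  rw [show ({a, b} : Finset V) = insert a {b} from rfl,
    Finset.sort_insert (· ≤ ·) (by simp [le_of_lt h]) (by simp [h.ne]),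
    Finset.sort_singleton]

theorem sgn_pair_left {v w : V} (h : v < w) : sgn v {v, w} = -1 := by
  simp [sgn, sort_pair h, List.idxOf_cons_self]

theorem sgn_pair_right {v w : V} (h : w < v) : sgn v {v, w} = 1 := by
  rw [Finset.pair_comm, sgn, sort_pair h]
  rw [List.idxOf_cons_ne _ h.ne, List.idxOf_cons_self]
  norm_num

theorem localBdry_vertex_self (v : V) (c : ℤ) :
    localBdry {v} (Finsupp.single ({v} : Finset V) c) = 0 := by
  classical
  rw [localBdry_single]
  simp

theorem localBdry_pair {v w : V} (h : v ≠ w) (c : ℤ) :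
    localBdry {v} (Finsupp.single ({v, w} : Finset V) c) =
      (sgn v {v, w} * c) • Finsupp.single ({v} : Finset V) (1 : ℤ) := by
  classical
  rw [localBdry_single, Finset.sum_pair h]
  have h1 : ({v, w} : Finset V).erase v = {w} := by
    rw [show ({v, w} : Finset V) = insert v {w} from rfl,
      Finset.erase_insert (by simp [h])]
  have h2 : ({v, w} : Finset V).erase w = {v} := by
    rw [Finset.pair_comm, show ({w, v} : Finset V) = insert w {v} from rfl,
      Finset.erase_insert (by simp [Ne.symm h])]
  rw [h1, h2]
  have hns : ¬ ({v} : Finset V) ⊆ {w} := by simp [h]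
  rw [if_neg hns, if_pos (Finset.Subset.refl _)]
  have hidx : (-1 : ℤ) ^ ((({v, w} : Finset V).sort (· ≤ ·)).idxOf w) = sgn v {v, w} := by
    rcases h.lt_or_gt with hlt | hlt
    · rw [sort_pair hlt, sgn_pair_left hlt, List.idxOf_cons_ne _ hlt.ne,
        List.idxOf_cons_self]
      norm_num
    · rw [sgn_pair_right hlt, show ({v, w} : Finset V) = {w, v} from Finset.pair_comm v w,
        sort_pair hlt, List.idxOf_cons_self]
      norm_num
  rw [hidx]
  simp [smul_smul, mul_comm]

end ASC
namespace ASC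
variable {V : Type*} [LinearOrder V]

theorem sort_triple {x y z : V} (h1 : x < y) (h2 : y < z) :
    ({x, y, z} : Finset V).sort (· ≤ ·) = [x, y, z] := by
  rw [show ({x, y, z} : Finset V) = insert x {y, z} from rfl,
    Finset.sort_insert (· ≤ ·)
      (by
        intro b hb
        rcases Finset.mem_insert.1 hb with rfl | hb
        · exact h1.le
        · rw [Finset.mem_singleton] at hb; subst hb; exact (h1.trans h2).le)
      (by simp [h1.ne, (h1.trans h2).ne]),
    sort_pair h2]

theorem key_identity_lt {v a b : V} (hva : v ≠ a) (hvb : v ≠ b) (hab : a < b) :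
    (-1 : ℤ) ^ ((({v, a, b} : Finset V).sort (· ≤ ·)).idxOf a) * sgn v {v, b} +
      (-1 : ℤ) ^ ((({v, a, b} : Finset V).sort (· ≤ ·)).idxOf b) * sgn v {v, a} = 0 := by
  rcases hva.lt_or_gt with h1 | h1
  · -- v < a < b
    rw [sort_triple h1 hab, sgn_pair_left (h1.trans hab), sgn_pair_left h1,
      List.idxOf_cons_ne _ h1.ne, List.idxOf_cons_self,
      List.idxOf_cons_ne _ (h1.trans hab).ne, List.idxOf_cons_ne _ hab.ne,
      List.idxOf_cons_self]
    norm_num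
  · rcases hvb.lt_or_gt with h2 | h2
    · -- a < v < b
      rw [show ({v, a, b} : Finset V) = {a, v, b} from Finset.insert_comm v a {b},
        sort_triple h1 h2, sgn_pair_left h2, sgn_pair_right h1,
        List.idxOf_cons_self, List.idxOf_cons_ne _ (h1.trans h2).ne,
        List.idxOf_cons_ne _ h2.ne, List.idxOf_cons_self]
      norm_num
    · -- a < b < v
      rw [show ({v, a, b} : Finset V) = {a, b, v} by
          rw [Finset.insert_comm v a, Finset.pair_comm v b],
        sort_triple hab h2, sgn_pair_right h2, sgn_pair_right (hab.trans h2),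
        List.idxOf_cons_self, List.idxOf_cons_ne _ hab.ne,
        List.idxOf_cons_self]
      norm_num

theorem key_identity {v a b : V} (hva : v ≠ a) (hvb : v ≠ b) (hab : a ≠ b) :
    (-1 : ℤ) ^ ((({v, a, b} : Finset V).sort (· ≤ ·)).idxOf a) * sgn v {v, b} +
      (-1 : ℤ) ^ ((({v, a, b} : Finset V).sort (· ≤ ·)).idxOf b) * sgn v {v, a} = 0 := by
  rcases hab.lt_or_gt with h | h
  · exact key_identity_lt hva hvb h
  · have := key_identity_lt hvb hva h
    rw [show ({v, b, a} : Finset V) = {v, a, b} by rw [Finset.pair_comm b a]] at this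
    linarith

end ASC
namespace ASC
variable {V : Type*} [LinearOrder V]

theorem neg_one_pow_mul_self (n : ℕ) : ((-1 : ℤ) ^ n) * (-1) ^ n = 1 := by
  rw [← pow_add]
  exact Even.neg_one_pow ⟨_, rfl⟩

theorem localBdry_insert (σ : Finset V) {w : V} (hw : w ∉ σ) (c : ℤ) :
    ∃ u : ℤ, u * u = 1 ∧
      localBdry σ (Finsupp.single (insert w σ) c) = (u * c) • Finsupp.single σ (1 : ℤ) := by
  classical
  refine ⟨(-1) ^ (((insert w σ).sort (· ≤ ·)).idxOf w), neg_one_pow_mul_self _, ?_⟩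
  rw [localBdry_single, Finset.sum_insert hw, Finset.erase_insert hw,
    if_pos (Finset.Subset.refl σ)]
  have : ∀ x ∈ σ, (if σ ⊆ (insert w σ).erase x then
      (-1 : ℤ) ^ (((insert w σ).sort (· ≤ ·)).idxOf x) •
        Finsupp.single ((insert w σ).erase x) (1 : ℤ) else 0) = 0 := by
    intro x hx
    rw [if_neg]
    intro hsub
    exact (Finset.notMem_erase x _) (hsub hx)
  rw [Finset.sum_congr rfl this]
  simp [smul_smul, mul_comm]

theorem combo (X Y : Finset V →₀ ℤ) (Pa Pb sa sb c : ℤ)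
    (hkey : Pa * sb + Pb * sa = 0) (ha2 : sa * sa = 1) (hb2 : sb * sb = 1) :
    c • (Pa • X + Pb • Y) = ((Pa * sb) * c) • (sb • X - sa • Y) := by
  have h1 : c * Pa = Pa * sb * c * sb := by linear_combination (-(Pa * c)) * hb2
  have h2 : c * Pb = -(Pa * sb * c * sa) := by linear_combination c * sa * hkey - c * Pb * ha2
  rw [smul_add, smul_smul, smul_smul, h1, h2, neg_smul, smul_sub, smul_smul, smul_smul,
    ← sub_eq_add_neg]

theorem localBdry_triangle {v a b : V} (hva : v ≠ a) (hvb : v ≠ b) (hab : a ≠ b) (c : ℤ) :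
    ∃ u : ℤ, u * u = 1 ∧
      localBdry {v} (Finsupp.single ({v, a, b} : Finset V) c) =
        (u * c) • (sgn v {v, b} • Finsupp.single ({v, b} : Finset V) (1 : ℤ)
          - sgn v {v, a} • Finsupp.single ({v, a} : Finset V) (1 : ℤ)) := by
  classical
  refine ⟨(-1) ^ ((({v, a, b} : Finset V).sort (· ≤ ·)).idxOf a) * sgn v {v, b}, ?_, ?_⟩
  · have h1 := neg_one_pow_mul_self ((({v, a, b} : Finset V).sort (· ≤ ·)).idxOf a)
    have h2 := sgn_mul_self v {v, b}
    linear_combination (sgn v {v, b} * sgn v {v, b}) * h1 + h2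
  · have hva' : v ∉ ({a, b} : Finset V) := by simp [hva, hvb]
    have hab' : a ∉ ({b} : Finset V) := by simp [hab]
    have e1 : ({v, a, b} : Finset V).erase v = {a, b} := Finset.erase_insert hva'
    have e2 : ({v, a, b} : Finset V).erase a = {v, b} := by
      rw [Finset.erase_insert_of_ne hva, Finset.erase_insert hab']
    have e3 : ({v, a, b} : Finset V).erase b = {v, a} := by
      rw [Finset.erase_insert_of_ne hvb, Finset.erase_insert_of_ne hab]
      simp
    rw [localBdry_single, Finset.sum_insert hva', Finset.sum_insert hab',
      Finset.sum_singleton, e1, e2, e3, if_neg (by simp [hva, hvb]),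
      if_pos (by simp), if_pos (by simp)]
    rw [zero_add]
    exact combo _ _ _ _ _ _ _ (key_identity hva hvb hab) (sgn_mul_self v {v, a})
      (sgn_mul_self v {v, b})
end ASC
namespace ASC
variable {V : Type*} [LinearOrder V]

theorem subsingleton_localHomology_iff (K : ASC V) (σ : Finset V) (k : ℕ) :
    Subsingleton (localHomology K σ k) ↔ localCycles K σ k ≤ localBoundaries K σ k := by
  unfold localHomology
  rw [Submodule.Quotient.subsingleton_iff, Submodule.comap_subtype_eq_top]

theorem relChains_eq_bot (K : ASC V) (σ : Finset V) (k : ℕ)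
    (h : ∀ s, s ∈ K.faces → σ ⊆ s → s.card ≠ k + 1) : relChains K σ k = ⊥ := by
  rw [relChains, show {s | s ∈ K.faces ∧ σ ⊆ s ∧ s.card = k + 1} = (∅ : Set (Finset V)) by
    ext s; simp only [Set.mem_setOf_eq, Set.mem_empty_iff_false, iff_false]
    rintro ⟨h1, h2, h3⟩; exact h s h1 h2 h3]
  exact Finsupp.supported_empty

theorem subsingleton_of_no_faces (K : ASC V) (σ : Finset V) (k : ℕ)
    (h : ∀ s, s ∈ K.faces → σ ⊆ s → s.card ≠ k + 1) :
    Subsingleton (localHomology K σ k) := by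
  rw [subsingleton_localHomology_iff]
  intro x hx
  have hb : x ∈ relChains K σ k := hx.1
  rw [relChains_eq_bot K σ k h, Submodule.mem_bot] at hb
  rw [hb]
  exact Submodule.zero_mem _

theorem single_mem_relChains {K : ASC V} {σ s : Finset V} {k : ℕ}
    (hs : s ∈ K.faces) (hσ : σ ⊆ s) (hc : s.card = k + 1) (c : ℤ) :
    Finsupp.single s c ∈ relChains K σ k :=
  Finsupp.single_mem_supported ℤ c ⟨hs, hσ, hc⟩

/-- The "codimension one" pattern: `relChains σ k` is supported on `{σ}` alone and
`localBdry σ (single σ) = 0`; then `h_k(σ) = 0` iff `σ` is contained in a `(k+1)`-face. -/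
theorem subsingleton_top_iff (K : ASC V) (σ : Finset V) (k : ℕ)
    (hσ : σ ∈ K.faces) (hσcard : σ.card = k + 1)
    (hself : localBdry σ (Finsupp.single σ (1 : ℤ)) = 0)
    (honly : ∀ s ∈ K.faces, σ ⊆ s → s.card = k + 1 → s = σ) :
    Subsingleton (localHomology K σ k) ↔
      ∃ t ∈ K.faces, σ ⊆ t ∧ t.card = k + 2 := by
  classical
  rw [subsingleton_localHomology_iff]
  constructor
  · intro h
    by_contra hno
    push_neg at hno
    have hcyc : Finsupp.single σ (1 : ℤ) ∈ localCycles K σ k :=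
      ⟨single_mem_relChains hσ (Finset.Subset.refl σ) hσcard 1, hself⟩
    obtain ⟨f, hf, hfe⟩ := h hcyc
    have hf' : f ∈ relChains K σ (k + 1) := hf
    have : relChains K σ (k + 1) = ⊥ := by
      apply relChains_eq_bot
      intro s hs hss hcard
      exact hno s hs hss (by omega)
    rw [this, Submodule.mem_bot] at hf'
    rw [hf', map_zero] at hfe
    exact one_ne_zero (Finsupp.single_eq_zero.1 hfe.symm)
  · rintro ⟨t, ht, hσt, htc⟩ f hf
    obtain ⟨w, hw, rfl⟩ := Finset.exists_eq_insert_iff.2 ⟨hσt, by omega⟩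
    obtain ⟨u, hu, hbd⟩ := localBdry_insert σ hw (1 : ℤ)
    have hsingle : Finsupp.single σ (1 : ℤ) ∈ localBoundaries K σ k := by
      refine ⟨Finsupp.single (insert w σ) u, single_mem_relChains ht hσt (by omega) u, ?_⟩
      rw [← Finsupp.smul_single_one (insert w σ) u, map_smul, hbd, smul_smul, mul_one, hu,
        one_smul]
    have hsupp : f = Finsupp.single σ (f σ) := by
      rw [← Finsupp.support_subset_singleton]
      intro x hx
      have := (Finsupp.mem_supported ℤ f).1 hf.1 hx
      obtain ⟨h1, h2, h3⟩ := this
      simp [honly x h1 h2 h3]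
    rw [hsupp, ← Finsupp.smul_single_one]
    exact Submodule.smul_mem _ _ hsingle

end ASC
namespace ASC
variable {V : Type*} [LinearOrder V]

theorem localBdry_self (σ : Finset V) (c : ℤ) :
    localBdry σ (Finsupp.single σ c) = 0 := by
  classical
  rw [localBdry_single]
  rw [Finset.sum_congr rfl (fun x hx => if_neg (fun hsub : σ ⊆ σ.erase x =>
    (Finset.notMem_erase x σ) (hsub hx)))]
  simp

theorem rep_pair {v : V} {s : Finset V} (hv : v ∈ s) (hc : s.card = 2) :
    ∃ w, v ≠ w ∧ s = {v, w} := by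
  classical
  obtain ⟨a, b, hab, rfl⟩ := Finset.card_eq_two.1 hc
  rcases Finset.mem_insert.1 hv with rfl | hv
  · exact ⟨b, hab, rfl⟩
  · rw [Finset.mem_singleton] at hv; subst hv
    exact ⟨a, hab.symm, Finset.pair_comm a v⟩

theorem rep_triple {v : V} {t : Finset V} (hv : v ∈ t) (hc : t.card = 3) :
    ∃ a b, v ≠ a ∧ v ≠ b ∧ a ≠ b ∧ t = {v, a, b} := by
  classical
  obtain ⟨x, y, z, hxy, hxz, hyz, rfl⟩ := Finset.card_eq_three.1 hc
  simp only [Finset.mem_insert, Finset.mem_singleton] at hv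
  rcases hv with rfl | rfl | rfl
  · exact ⟨y, z, hxy, hxz, hyz, rfl⟩
  · refine ⟨x, z, hxy.symm, hyz, hxz, ?_⟩
    ext u
    simp only [Finset.mem_insert, Finset.mem_singleton]
    tauto
  · refine ⟨x, y, hxz.symm, hyz.symm, hxy, ?_⟩
    ext u
    simp only [Finset.mem_insert, Finset.mem_singleton]
    tauto

theorem union_pair {v a b : V} : ({v, a} : Finset V) ∪ {v, b} = {v, a, b} := by
  ext x
  simp only [Finset.mem_union, Finset.mem_insert, Finset.mem_singleton]
  tauto

theorem card_triple {v a b : V} (hva : v ≠ a) (hvb : v ≠ b) (hab : a ≠ b) :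
    ({v, a, b} : Finset V).card = 3 := by
  rw [Finset.card_insert_of_notMem (by simp [hva, hvb]),
    Finset.card_insert_of_notMem (by simp [hab])]
  rfl

/-- The normalized generator associated to an edge of the link. -/
noncomputable def gnorm (v : V) (e : Finset V) : Finset V →₀ ℤ :=
  sgn v e • Finsupp.single e (1 : ℤ)

/-- The augmentation functional on local `1`-chains at `v`. -/
noncomputable def theta0 (v : V) : (Finset V →₀ ℤ) →ₗ[ℤ] ℤ :=
  Finsupp.lift ℤ ℤ (Finset V) (fun s => sgn v s)

theorem theta0_single (v : V) (s : Finset V) (c : ℤ) :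
    theta0 v (Finsupp.single s c) = c * sgn v s := by
  rw [theta0, Finsupp.lift_apply, Finsupp.sum_single_index (by simp), smul_eq_mul]

theorem theta0_gnorm (v : V) (e : Finset V) : theta0 v (gnorm v e) = 1 := by
  rw [gnorm, map_smul, theta0_single, smul_eq_mul, one_mul, sgn_mul_self]

theorem localBdry_gnorm {v : V} {e : Finset V} (hv : v ∈ e) (hc : e.card = 2) :
    localBdry {v} (gnorm v e) = Finsupp.single ({v} : Finset V) (1 : ℤ) := by
  obtain ⟨w, hvw, rfl⟩ := rep_pair hv hc
  rw [gnorm, map_smul, localBdry_pair hvw, mul_one, smul_smul, sgn_mul_self, one_smul]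

theorem localBdry_eq_theta0 (K : ASC V) (v : V) :
    ∀ f ∈ relChains K {v} 1,
      localBdry {v} f = (theta0 v f) • Finsupp.single ({v} : Finset V) (1 : ℤ) := by
  classical
  intro f hf
  rw [relChains, Finsupp.supported_eq_span_single] at hf
  induction hf using Submodule.span_induction with
  | mem x hx =>
    obtain ⟨s, hs, rfl⟩ := hx
    obtain ⟨hsf, hsub, hcard⟩ := hs
    have hv : v ∈ s := Finset.singleton_subset_iff.1 hsub
    obtain ⟨w, hvw, rfl⟩ := rep_pair hv hcard
    rw [localBdry_pair hvw, theta0_single, mul_one, one_mul]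
  | zero => simp
  | add x y _ _ hx hy => rw [map_add, map_add, hx, hy, add_smul]
  | smul c x _ hx => rw [map_smul, map_smul, hx, smul_smul, smul_eq_mul]

/-- Difference of normalized generators along an adjacency of the link is a boundary. -/
theorem gnorm_diff_mem_of_adj (K : ASC V) (v : V)
    {e f : {e : Finset V // e ∈ K.faces ∧ e.card = 2 ∧ v ∈ e}}
    (h : (K.vertexLinkGraph v).Adj e f) :
    gnorm v e.1 - gnorm v f.1 ∈ localBoundaries K ({v} : Finset V) 1 := by
  classical
  obtain ⟨hne, hunion⟩ := h
  obtain ⟨a, hva, he⟩ := rep_pair e.2.2.2 e.2.2.1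
  obtain ⟨b, hvb, hfr⟩ := rep_pair f.2.2.2 f.2.2.1
  have hab : a ≠ b := by
    rintro rfl
    exact hne (Subtype.ext (he.trans hfr.symm))
  rw [he, hfr, union_pair] at hunion
  rw [he, hfr]
  obtain ⟨u, hu, hbd⟩ := localBdry_triangle hva hvb hab (1 : ℤ)
  have hmem : Finsupp.single ({v, a, b} : Finset V) (1 : ℤ) ∈ relChains K {v} 2 :=
    single_mem_relChains hunion (by simp) (card_triple hva hvb hab) 1
  have hz : localBdry {v} (Finsupp.single ({v, a, b} : Finset V) (1 : ℤ))
      ∈ localBoundaries K ({v} : Finset V) 1 := ⟨_, hmem, rfl⟩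
  have := Submodule.smul_mem _ (-u) hz
  rw [hbd, mul_one, smul_smul, neg_mul, hu, neg_smul, one_smul, neg_sub] at this
  exact this

theorem gnorm_diff_mem_of_reachable (K : ASC V) (v : V)
    {e f : {e : Finset V // e ∈ K.faces ∧ e.card = 2 ∧ v ∈ e}}
    (h : (K.vertexLinkGraph v).Reachable e f) :
    gnorm v e.1 - gnorm v f.1 ∈ localBoundaries K ({v} : Finset V) 1 := by
  obtain ⟨p⟩ := h
  induction p with
  | nil => rw [sub_self]; exact Submodule.zero_mem _
  | @cons x y z hadj p ih =>
    rw [← sub_add_sub_cancel _ (gnorm v y.1) _]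
    exact Submodule.add_mem _ (gnorm_diff_mem_of_adj K v hadj) ih

end ASC
namespace ASC
variable {V : Type*} [LinearOrder V]

open Classical in
/-- Weight functional detecting the reachable component of `e₀` in the link of `v`. -/
noncomputable def thetaR (K : ASC V) (v : V)
    (e₀ : {e : Finset V // e ∈ K.faces ∧ e.card = 2 ∧ v ∈ e}) :
    (Finset V →₀ ℤ) →ₗ[ℤ] ℤ :=
  Finsupp.lift ℤ ℤ (Finset V) (fun s =>
    if h : s ∈ K.faces ∧ s.card = 2 ∧ v ∈ s then
      (if (K.vertexLinkGraph v).Reachable e₀ ⟨s, h⟩ then sgn v s else 0)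
    else 0)

open Classical in
theorem thetaR_gnorm (K : ASC V) (v : V)
    (e₀ e : {e : Finset V // e ∈ K.faces ∧ e.card = 2 ∧ v ∈ e}) :
    thetaR K v e₀ (gnorm v e.1) =
      if (K.vertexLinkGraph v).Reachable e₀ e then 1 else 0 := by
  classical
  rw [gnorm, map_smul, thetaR, Finsupp.lift_apply, Finsupp.sum_single_index (by simp)]
  rw [one_smul, dif_pos e.2]
  have he : (⟨e.1, e.2⟩ : {e : Finset V // e ∈ K.faces ∧ e.card = 2 ∧ v ∈ e}) = e :=
    Subtype.coe_eta e e.2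
  rw [he]
  split_ifs
  · rw [smul_eq_mul, sgn_mul_self]
  · rw [smul_eq_mul, mul_zero]

theorem thetaR_bdry_vanish (K : ASC V) (v : V)
    (e₀ : {e : Finset V // e ∈ K.faces ∧ e.card = 2 ∧ v ∈ e}) :
    ∀ f ∈ relChains K {v} 2, thetaR K v e₀ (localBdry {v} f) = 0 := by
  classical
  intro f hf
  rw [relChains, Finsupp.supported_eq_span_single] at hf
  induction hf using Submodule.span_induction with
  | mem x hx =>
    obtain ⟨s, hs, rfl⟩ := hx
    obtain ⟨hsf, hsub, hcard⟩ := hs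
    have hvs : v ∈ s := Finset.singleton_subset_iff.1 hsub
    obtain ⟨a, b, hva, hvb, hab, rfl⟩ := rep_triple hvs (by omega)
    obtain ⟨u, hu, hbd⟩ := localBdry_triangle hva hvb hab (1 : ℤ)
    rw [hbd, mul_one]
    have hea : ({v, a} : Finset V) ∈ K.faces :=
      K.down_closed _ hsf _ (by intro x hx; simp at hx; rcases hx with rfl | rfl <;> simp)
        ⟨v, by simp⟩
    have heb : ({v, b} : Finset V) ∈ K.faces :=
      K.down_closed _ hsf _ (by intro x hx; simp at hx; rcases hx with rfl | rfl <;> simp)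
        ⟨v, by simp⟩
    have hca : ({v, a} : Finset V).card = 2 := by
      rw [Finset.card_insert_of_notMem (by simp [hva])]; rfl
    have hcb : ({v, b} : Finset V).card = 2 := by
      rw [Finset.card_insert_of_notMem (by simp [hvb])]; rfl
    set ea : {e : Finset V // e ∈ K.faces ∧ e.card = 2 ∧ v ∈ e} :=
      ⟨{v, a}, hea, hca, by simp⟩
    set eb : {e : Finset V // e ∈ K.faces ∧ e.card = 2 ∧ v ∈ e} :=
      ⟨{v, b}, heb, hcb, by simp⟩
    have hadj : (K.vertexLinkGraph v).Adj ea eb := by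
      refine ⟨?_, ?_⟩
      · intro hh
        have : ({v, a} : Finset V) = {v, b} := congrArg Subtype.val hh
        have : a ∈ ({v, b} : Finset V) := this ▸ (by simp : a ∈ ({v, a} : Finset V))
        simp only [Finset.mem_insert, Finset.mem_singleton] at this
        rcases this with rfl | rfl
        · exact hva rfl
        · exact hab rfl
      · show ({v, a} : Finset V) ∪ {v, b} ∈ K.faces
        rw [union_pair]; exact hsf
    have hiff : (K.vertexLinkGraph v).Reachable e₀ ea ↔
        (K.vertexLinkGraph v).Reachable e₀ eb :=
      ⟨fun h => h.trans hadj.reachable, fun h => h.trans hadj.symm.reachable⟩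
    have hGa : thetaR K v e₀ (gnorm v ({v, a} : Finset V)) =
        if (K.vertexLinkGraph v).Reachable e₀ ea then 1 else 0 := thetaR_gnorm K v e₀ ea
    have hGb : thetaR K v e₀ (gnorm v ({v, b} : Finset V)) =
        if (K.vertexLinkGraph v).Reachable e₀ eb then 1 else 0 := thetaR_gnorm K v e₀ eb
    rw [show (sgn v {v, b} • Finsupp.single ({v, b} : Finset V) (1 : ℤ)
        - sgn v {v, a} • Finsupp.single ({v, a} : Finset V) (1 : ℤ))
        = gnorm v ({v, b} : Finset V) - gnorm v ({v, a} : Finset V) from rfl]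
    rw [map_smul, map_sub, hGa, hGb, hiff]
    simp
  | zero => simp
  | add x y _ _ hx hy => rw [map_add, map_add, hx, hy, add_zero]
  | smul c x _ hx => rw [map_smul, map_smul, hx, smul_zero]

theorem h1_vertex_iff (K : ASC V) (v : V) :
    Subsingleton (localHomology K ({v} : Finset V) 1) ↔
      ∀ e f : {e : Finset V // e ∈ K.faces ∧ e.card = 2 ∧ v ∈ e},
        (K.vertexLinkGraph v).Reachable e f := by
  classical
  rw [subsingleton_localHomology_iff]
  constructor
  · intro h e f
    have hmeme : Finsupp.single e.1 (1 : ℤ) ∈ relChains K {v} 1 :=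
      single_mem_relChains e.2.1 (Finset.singleton_subset_iff.2 e.2.2.2)
        (by rw [e.2.2.1]) 1
    have hmemf : Finsupp.single f.1 (1 : ℤ) ∈ relChains K {v} 1 :=
      single_mem_relChains f.2.1 (Finset.singleton_subset_iff.2 f.2.2.2)
        (by rw [f.2.2.1]) 1
    have hz_chain : gnorm v e.1 - gnorm v f.1 ∈ relChains K {v} 1 :=
      Submodule.sub_mem _ (Submodule.smul_mem _ _ hmeme) (Submodule.smul_mem _ _ hmemf)
    have hz_ker : localBdry {v} (gnorm v e.1 - gnorm v f.1) = 0 := by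
      rw [map_sub, localBdry_gnorm e.2.2.2 e.2.2.1, localBdry_gnorm f.2.2.2 f.2.2.1,
        sub_self]
    obtain ⟨w, hw, hwe⟩ := h ⟨hz_chain, hz_ker⟩
    have h0 : thetaR K v e (gnorm v e.1 - gnorm v f.1) = 0 := by
      rw [← hwe]; exact thetaR_bdry_vanish K v e w hw
    rw [map_sub, thetaR_gnorm K v e e, thetaR_gnorm K v e f,
      if_pos (SimpleGraph.Reachable.refl e)] at h0
    by_contra hreach
    rw [if_neg hreach, sub_zero] at h0
    exact one_ne_zero h0
  · intro hconn f hf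
    obtain ⟨hchain, hker⟩ := hf
    by_cases hne : Nonempty {e : Finset V // e ∈ K.faces ∧ e.card = 2 ∧ v ∈ e}
    · obtain ⟨e₀⟩ := hne
      have key : ∀ g ∈ relChains K {v} 1,
          g - (theta0 v g) • gnorm v e₀.1 ∈ localBoundaries K ({v} : Finset V) 1 := by
        intro g hg
        rw [relChains, Finsupp.supported_eq_span_single] at hg
        induction hg using Submodule.span_induction with
        | mem x hx =>
          obtain ⟨s, hs, rfl⟩ := hx
          obtain ⟨hsf, hsub, hcard⟩ := hs
          have hvs : v ∈ s := Finset.singleton_subset_iff.1 hsub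
          have hsc : s.card = 2 := by omega
          have hmem := gnorm_diff_mem_of_reachable K v (hconn ⟨s, hsf, hsc, hvs⟩ e₀)
          show Finsupp.single s (1 : ℤ)
            - theta0 v (Finsupp.single s (1 : ℤ)) • gnorm v e₀.1
              ∈ localBoundaries K ({v} : Finset V) 1
          have h1 : Finsupp.single s (1 : ℤ) = sgn v s • gnorm v s := by
            rw [gnorm, smul_smul, sgn_mul_self, one_smul]
          rw [theta0_single, one_mul, h1, ← smul_sub]
          exact Submodule.smul_mem _ _ hmem
        | zero =>
          rw [map_zero, zero_smul, sub_zero]; exact Submodule.zero_mem _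
        | add x y _ _ hx hy =>
          rw [map_add, add_smul,
            show x + y - (theta0 v x • gnorm v e₀.1 + theta0 v y • gnorm v e₀.1)
              = (x - theta0 v x • gnorm v e₀.1) + (y - theta0 v y • gnorm v e₀.1) by abel]
          exact Submodule.add_mem _ hx hy
        | smul c x _ hx =>
          rw [map_smul, smul_eq_mul, mul_smul, ← smul_sub]
          exact Submodule.smul_mem _ _ hx
      have h0 : theta0 v f = 0 := by
        have hh := localBdry_eq_theta0 K v f hchain
        rw [hker] at hh
        rcases smul_eq_zero.1 hh.symm with h' | h'
        · exact h'
        · exact absurd (Finsupp.single_eq_zero.1 h') one_ne_zero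
      have := key f hchain
      rwa [h0, zero_smul, sub_zero] at this
    · have hbot : relChains K {v} 1 = ⊥ := by
        apply relChains_eq_bot
        intro s hs hsub hc
        exact hne ⟨⟨s, hs, by omega, Finset.singleton_subset_iff.1 hsub⟩⟩
      have hchain' : f ∈ relChains K {v} 1 := hchain
      rw [hbot, Submodule.mem_bot] at hchain'
      rw [hchain']
      exact Submodule.zero_mem _

end ASC
namespace ASC
variable {V : Type*} [LinearOrder V]

theorem exists_adj_of_reachable_ne {α : Type*} {G : SimpleGraph α} {x y : α}
    (h : G.Reachable x y) (hne : x ≠ y) : ∃ z, G.Adj x z := by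
  obtain ⟨p⟩ := h
  cases p with
  | nil => exact absurd rfl hne
  | cons h q => exact ⟨_, h⟩

theorem honly_vertex (K : ASC V) (v : V) :
    ∀ s ∈ K.faces, ({v} : Finset V) ⊆ s → s.card = 0 + 1 → s = {v} := by
  intro s _ hsub hc
  obtain ⟨w, rfl⟩ := Finset.card_eq_one.1 (by omega : s.card = 1)
  have := Finset.singleton_subset_iff.1 hsub
  rw [Finset.mem_singleton] at this
  rw [this]

theorem honly_edge (K : ASC V) (σ : Finset V) (hc : σ.card = 2) :
    ∀ s ∈ K.faces, σ ⊆ s → s.card = 1 + 1 → s = σ := by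
  intro s _ hsub hcs
  exact (Finset.eq_of_subset_of_card_le hsub (by omega)).symm

end ASC

open ASC in
theorem stmt10_aux {V : Type*} [LinearOrder V] (Y : ASC V)
    (hdim : ∀ s ∈ Y.faces, s.card ≤ 3) (hlf : Y.LocallyFinite) :
    (∀ σ ∈ Y.faces, ∀ k : ℕ, k ≠ 2 → Subsingleton (localHomology Y σ k)) ↔
    (∀ v : V, ({v} : Finset V) ∈ Y.faces →
      (Y.vertexLinkGraph v).Connected ∧ ∃ a b, (Y.vertexLinkGraph v).Adj a b) := by
  classical
  constructor
  · intro h v hv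
    obtain ⟨e, he, hsub, hce⟩ := (subsingleton_top_iff Y {v} 0 hv (by simp)
      (localBdry_self _ 1) (honly_vertex Y v)).1 (h {v} hv 0 (by norm_num))
    have hve : v ∈ e := Finset.singleton_subset_iff.1 hsub
    have hce2 : e.card = 2 := by omega
    have hpc := (h1_vertex_iff Y v).1 (h {v} hv 1 (by norm_num))
    have ea : {e' : Finset V // e' ∈ Y.faces ∧ e'.card = 2 ∧ v ∈ e'} := ⟨e, he, hce2, hve⟩
    refine ⟨(SimpleGraph.connected_iff _).2 ⟨fun a b => hpc a b, ⟨ea⟩⟩, ?_⟩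
    -- e lies in a triangle
    obtain ⟨t, ht, het, hct⟩ := (subsingleton_top_iff Y e 1 he (by omega)
      (localBdry_self _ 1) (honly_edge Y e hce2)).1 (h e he 1 (by norm_num))
    obtain ⟨w, hw, rfl⟩ := Finset.exists_eq_insert_iff.2 ⟨het, by omega⟩
    have hvw : v ≠ w := fun hh => hw (hh ▸ hve)
    have hbf : ({v, w} : Finset V) ∈ Y.faces := by
      refine Y.down_closed _ ht _ ?_ ⟨v, by simp⟩
      intro u hu
      simp only [Finset.mem_insert, Finset.mem_singleton] at hu
      rcases hu with rfl | rfl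
      · exact Finset.mem_insert_of_mem hve
      · exact Finset.mem_insert_self _ _
    have hbc : ({v, w} : Finset V).card = 2 := by
      rw [Finset.card_insert_of_notMem (by simp [hvw])]; rfl
    have huni : e ∪ ({v, w} : Finset V) = insert w e := by
      ext u
      simp only [Finset.mem_union, Finset.mem_insert, Finset.mem_singleton]
      constructor
      · rintro (h' | rfl | rfl)
        · exact Or.inr h'
        · exact Or.inr hve
        · exact Or.inl rfl
      · rintro (rfl | h')
        · exact Or.inr (Or.inr rfl)
        · exact Or.inl h'
    refine ⟨⟨e, he, hce2, hve⟩, ⟨{v, w}, hbf, hbc, by simp⟩, ?_, ?_⟩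
    · intro hh
      have : e = ({v, w} : Finset V) := congrArg Subtype.val hh
      exact hw (by rw [this]; simp)
    · show e ∪ ({v, w} : Finset V) ∈ Y.faces
      rw [huni]; exact ht
  · intro hlk σ hσ k hk
    have hc1 : 1 ≤ σ.card := Finset.card_pos.2 (Y.nonempty_of_mem σ hσ)
    have hc3 := hdim σ hσ
    have hcases : σ.card = 1 ∨ σ.card = 2 ∨ σ.card = 3 := by omega
    rcases hcases with hc | hc | hc
    · -- vertex
      obtain ⟨v, rfl⟩ := Finset.card_eq_one.1 hc
      obtain ⟨hconn, a, b, hab⟩ := hlk v hσ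
      match k, hk with
      | 0, _ =>
        refine (subsingleton_top_iff Y {v} 0 hσ (by simp) (localBdry_self _ 1)
          (honly_vertex Y v)).2 ?_
        obtain ⟨e⟩ := hconn.nonempty
        exact ⟨e.1, e.2.1, Finset.singleton_subset_iff.2 e.2.2.2, by omega⟩
      | 1, _ =>
        exact (h1_vertex_iff Y v).2 (fun e f => hconn.preconnected e f)
      | 2, hk' => exact absurd rfl hk'
      | (n + 3), _ =>
        exact subsingleton_of_no_faces Y _ _ (fun s hs _ => by
          have := hdim s hs; omega)
    · -- edge
      match k, hk with
      | 0, _ =>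
        refine subsingleton_of_no_faces Y _ _ (fun s hs hsub => ?_)
        have := Finset.card_le_card hsub
        omega
      | 1, _ =>
        refine (subsingleton_top_iff Y σ 1 hσ (by omega) (localBdry_self _ 1)
          (honly_edge Y σ hc)).2 ?_
        -- body continues
        obtain ⟨v, hvσ⟩ := Y.nonempty_of_mem σ hσ
        have hvf : ({v} : Finset V) ∈ Y.faces :=
          Y.down_closed _ hσ _ (Finset.singleton_subset_iff.2 hvσ) ⟨v, by simp⟩
        obtain ⟨hconn, a, b, hab⟩ := hlk v hvf
        obtain ⟨c, hnec, hcu⟩ :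
            ∃ c, (Y.vertexLinkGraph v).Adj ⟨σ, hσ, hc, hvσ⟩ c := by
          rcases eq_or_ne (⟨σ, hσ, hc, hvσ⟩ :
              {e : Finset V // e ∈ Y.faces ∧ e.card = 2 ∧ v ∈ e}) a with hea | hea
          · exact exists_adj_of_reachable_ne (hconn.preconnected _ b) (hea ▸ hab.ne)
          · exact exists_adj_of_reachable_ne (hconn.preconnected _ a) hea
        have hvc : v ∈ c.1 := c.2.2.2
        obtain ⟨x, hvx, hx⟩ := rep_pair hvσ hc
        obtain ⟨y, hvy, hy⟩ := rep_pair hvc c.2.2.1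
        have hxy : x ≠ y := by
          rintro rfl
          exact hnec (Subtype.ext (by
            show σ = c.1
            rw [hx, hy]))
        refine ⟨σ ∪ c.1, hcu, Finset.subset_union_left, ?_⟩
        · rw [hx, hy, union_pair]
          have := card_triple hvx hvy hxy
          omega
      | 2, hk' => exact absurd rfl hk'
      | (n + 3), _ =>
        refine subsingleton_of_no_faces Y _ _ (fun s hs hsub => ?_)
        have := hdim s hs
        omega
    · -- triangle
      refine subsingleton_of_no_faces Y _ _ (fun s hs hsub => ?_)
      have h3 := Finset.card_le_card hsub
      have h4 := hdim s hs
      omega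

open ASC in
/-- A simplicial `2`-complex `Y` is a local homology CM complex of
dimension `2` (the local homology at every simplex is concentrated in degree `2`) if and
only if every vertex link of `Y` is a nonempty connected graph containing at least one
edge. -/
theorem stmt10 {V : Type*} [LinearOrder V] (Y : ASC V)
    (hdim : ∀ s ∈ Y.faces, s.card ≤ 3) (hlf : Y.LocallyFinite) :
    (∀ σ ∈ Y.faces, ∀ k : ℕ, k ≠ 2 → Subsingleton (localHomology Y σ k)) ↔
    (∀ v : V, ({v} : Finset V) ∈ Y.faces →
      (Y.vertexLinkGraph v).Connected ∧ ∃ a b, (Y.vertexLinkGraph v).Adj a b) := by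
  exact stmt10_aux Y hdim hlf
end
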